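/- arXiv:2003.09481 — 3 statements merged into one kernel-verified Lean document; each statement's English description precedes it below -/
import Mathlib

section
/- Let f : Fin n → ℕ be strictly increasing with 1 ≤ f(i) ≤ m for all i, and let k = ⌈log₂ m⌉ − 1. Define positions I_r(i) by I_0(i) = i + 1 and I_{r+1}(i) = I_r(i) + 2^(k−r) if I_r(i) + 2^(k−r) ≤ f(i), else I_{r+1}(i) = I_r(i). Then for all r ≤ k+1 and all i, 0 ≤ f(i) − I_r(i) < 2^(k+1−r). -/
/-!
Each round either hops by `2 ^ (k - r)` or stops because the hop would overshoot. In the first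
case the gap to the destination, which was below `2 ^ (k - r + 1)` by induction, shrinks by
`2 ^ (k - r)`; in the second case the gap was already below `2 ^ (k - r)`. Initially the gap is
`f i - (i + 1) < m ≤ 2 ^ (k + 1)`, and `f i ≥ i + 1` because `f` is strictly increasing and
positive.
-/

/-- Position of an element in Oblivious-Distribute after `r` rounds, starting
at `start`, with destination `dest`: at round `r` hop forward by `2^(k-r)`
whenever this does not overshoot `dest`. -/
def pos (k dest start : ℕ) : ℕ → ℕ
  | 0 => start
  | r + 1 =>
    if pos k dest start r + 2 ^ (k - r) ≤ dest
    then pos k dest start r + 2 ^ (k - r)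
    else pos k dest start r

lemma Fin.val_add_one_le_of_strictMono {n : ℕ} {f : Fin n → ℕ} (hf : StrictMono f)
    (hpos : ∀ i, 0 < f i) (i : Fin n) : (i : ℕ) + 1 ≤ f i := by
  obtain ⟨i, hi⟩ := i
  induction i with
  | zero => exact hpos _
  | succ i ih => exact (ih (by omega)).trans_lt (hf (Fin.mk_lt_mk.2 i.lt_succ_self))

lemma le_two_pow_clog_sub_one_add_one (m : ℕ) : m ≤ 2 ^ (Nat.clog 2 m - 1 + 1) :=
  (Nat.le_pow_clog one_lt_two m).trans (Nat.pow_le_pow_right two_pos (by omega))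

lemma pos_le_dest {k dest start : ℕ} (h : start ≤ dest) (r : ℕ) : pos k dest start r ≤ dest := by
  induction r with
  | zero => exact h
  | succ r ih =>
    simp only [pos]
    split_ifs with hhop
    exacts [hhop, ih]

lemma dest_sub_pos_lt {k dest start : ℕ} (h : start ≤ dest) (hgap : dest - start < 2 ^ (k + 1))
    {r : ℕ} (hr : r ≤ k + 1) : dest - pos k dest start r < 2 ^ (k + 1 - r) := by
  induction r with
  | zero => exact hgap
  | succ r ih =>
    have hprev : dest - pos k dest start r < 2 ^ (k - r) + 2 ^ (k - r) := by
      rw [← two_mul, ← pow_succ', show k - r + 1 = k + 1 - r by omega]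
      exact ih (by omega)
    have hle := pos_le_dest (k := k) h r
    rw [show k + 1 - (r + 1) = k - r by omega]
    simp only [pos]
    split_ifs with hhop <;> omega

/-- Main invariant of Oblivious-Distribute: for a strictly increasing
`f : Fin n → ℕ` with `1 ≤ f i ≤ m`, `k = ⌈log₂ m⌉ - 1`, and positions started
at `i + 1` (1-based), we have `0 ≤ f i - I_r(i) < 2^(k+1-r)` for all `r ≤ k+1`. -/
theorem oblivious_distribute_invariant (n m k : ℕ) (f : Fin n → ℕ)
    (hf : StrictMono f) (hm : ∀ i, 1 ≤ f i ∧ f i ≤ m)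
    (hk : k = Nat.clog 2 m - 1) :
    ∀ r ≤ k + 1, ∀ i : Fin n,
      pos k (f i) ((i : ℕ) + 1) r ≤ f i ∧
      f i - pos k (f i) ((i : ℕ) + 1) r < 2 ^ (k + 1 - r) := by
  intro r hr i
  have hstart : (i : ℕ) + 1 ≤ f i := Fin.val_add_one_le_of_strictMono hf (fun j ↦ (hm j).1) i
  have hm_le : m ≤ 2 ^ (k + 1) := hk ▸ le_two_pow_clog_sub_one_add_one m
  have hgap : f i - (i + 1) < 2 ^ (k + 1) := by have := (hm i).2; omega
  exact ⟨pos_le_dest hstart r, dest_sub_pos_lt hstart hgap hr⟩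
end

section
/- In the greedy power-of-two routing process with strictly increasing destinations f and I_0(i) = i+1, the positions remain strictly increasing at every round: for all r and all i < j, I_r(i) < I_r(j). Consequently no two non-null elements ever occupy the same cell (collision-freeness). -/
theorem Nat.div_mul_eq_ite_div_two_mul (x : ℕ) {b : ℕ} (hb : 0 < b) :
    x / b * b =
      if x / (2 * b) * (2 * b) + b ≤ x then x / (2 * b) * (2 * b) + b
      else x / (2 * b) * (2 * b) := by
  have hhalf : x / (2 * b) = x / b / 2 := by
    rw [Nat.div_div_eq_div_mul, Nat.mul_comm]
  have hcond : x / (2 * b) * (2 * b) + b ≤ x ↔ x / b / 2 * 2 + 1 ≤ x / b := by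
    rw [Nat.le_div_iff_mul_le hb, hhalf]
    constructor <;> intro h <;> linarith
  rw [hhalf] at hcond ⊢
  set q := x / b
  split_ifs with h
  · have hq : q = q / 2 * 2 + 1 := by omega
    conv_lhs => rw [hq]
    ring
  · have hq : q = q / 2 * 2 := by omega
    conv_lhs => rw [hq]
    ring

theorem pos_eq_add_div_mul {k dest start : ℕ} (hd : dest - start < 2 ^ (k + 1))
    {r : ℕ} (hr : r ≤ k + 1) :
    pos k dest start r =
      start + (dest - start) / 2 ^ (k + 1 - r) * 2 ^ (k + 1 - r) := by
  induction r with
  | zero => simp [pos, Nat.div_eq_of_lt hd]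
  | succ r ih =>
    have hpow : 2 ^ (k + 1 - r) = 2 * 2 ^ (k - r) := by
      rw [show k + 1 - r = k - r + 1 by omega, pow_succ']
    rw [pos, ih (by omega), show k + 1 - (r + 1) = k - r by omega, hpow,
      Nat.div_mul_eq_ite_div_two_mul (b := 2 ^ (k - r)) _ (by positivity)]
    split_ifs <;> omega

theorem pos_lt_pos {k d d' s s' r : ℕ} (hd : d - s < 2 ^ (k + 1))
    (hd' : d' - s' < 2 ^ (k + 1)) (hs : s < s') (hgap : d - s ≤ d' - s')
    (hr : r ≤ k + 1) : pos k d s r < pos k d' s' r := by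
  rw [pos_eq_add_div_mul hd hr, pos_eq_add_div_mul hd' hr]
  exact add_lt_add_of_lt_of_le hs (Nat.mul_le_mul_right _ (Nat.div_le_div_right hgap))

theorem StrictMono.fin_add_sub_le {n : ℕ} {f : Fin n → ℕ} (hf : StrictMono f)
    {i j : Fin n} (hij : i ≤ j) : f i + (j - i : ℕ) ≤ f j := by
  obtain ⟨j, hj⟩ := j
  replace hij : (i : ℕ) ≤ j := hij
  induction j, hij using Nat.le_induction with
  | base => simp
  | succ j hij ih =>
    have hstep := hf (show (⟨j, by omega⟩ : Fin n) < ⟨j + 1, hj⟩ from Nat.lt_succ_self j)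
    have := ih (by omega)
    simp only at this hstep ⊢
    omega

/-- Collision-freeness of Oblivious-Distribute: the positions remain strictly
increasing in the element index at every round, so no two non-null elements
ever occupy the same cell. -/
theorem oblivious_distribute_no_collision (n m k : ℕ) (f : Fin n → ℕ)
    (hf : StrictMono f) (hm : ∀ i, 1 ≤ f i ∧ f i ≤ m)
    (hk : k = Nat.clog 2 m - 1) :
    ∀ r ≤ k + 1, ∀ i j : Fin n, i < j →
      pos k (f i) ((i : ℕ) + 1) r < pos k (f j) ((j : ℕ) + 1) r := by
  intro r hr i j hij
  have hm_le : m ≤ 2 ^ (k + 1) :=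
    (Nat.le_pow_clog one_lt_two m).trans (Nat.pow_le_pow_right two_pos (by omega))
  have hdist : ∀ t, f t - ((t : ℕ) + 1) < 2 ^ (k + 1) := fun t => by
    have := hm t
    omega
  have hgap := hf.fin_add_sub_le hij.le
  have hij' : (i : ℕ) < j := hij
  exact pos_lt_pos (hdist i) (hdist j) (by omega) (by omega) hr
end

section
/- Let A be an array of length m over Option α where, for the offsets f(i) = 1 + Σ_{j<i} g(j), cell f(i) holds value xᵢ for each i with g(i) > 0 and all other cells hold none. Then the forward fill pass (replacing each none by the last previously seen some value) produces the array consisting of g(x₁) copies of x₁, followed by g(x₂) copies of x₂, and so on. -/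
/-- The forward fill pass: replace each `none` by the last previously seen
`some` value. -/
def fillPass {α : Type*} : Option α → List (Option α) → List (Option α)
  | _, [] => []
  | px, none :: t => px :: fillPass px t
  | _, some x :: t => some x :: fillPass (some x) t

section FillPass

variable {α : Type*}

theorem fillPass_replicate_none_append (px : Option α) (k : ℕ) (t : List (Option α)) :
    fillPass px (List.replicate k none ++ t) = List.replicate k px ++ fillPass px t := by
  induction k with
  | zero => rfl
  | succ k ih => simp only [List.replicate_succ, List.cons_append, fillPass, ih]

theorem fillPass_some_cons_replicate_none_append (px : Option α) (a : α) (k : ℕ)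
    (t : List (Option α)) :
    fillPass px (some a :: List.replicate k none ++ t) =
      List.replicate (k + 1) (some a) ++ fillPass (some a) t := by
  rw [List.cons_append, fillPass, fillPass_replicate_none_append]
  rfl

/-- Every nonempty block starts with a `some`, so the fill pass never looks past the block
boundary: the incoming value `px` is irrelevant. -/
theorem fillPass_flatMap_blocks {ι : Type*} (g : ι → ℕ) (x : ι → α) (l : List ι)
    (px : Option α) :
    fillPass px (l.flatMap fun i =>
        if g i = 0 then [] else some (x i) :: List.replicate (g i - 1) none) =
      l.flatMap fun i => List.replicate (g i) (some (x i)) := by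
  induction l generalizing px with
  | nil => rfl
  | cons i l ih =>
    rw [List.flatMap_cons, List.flatMap_cons]
    cases hgi : g i with
    | zero => simp only [if_true, List.nil_append, List.replicate_zero, ih]
    | succ k =>
      rw [if_neg k.succ_ne_zero, Nat.add_sub_cancel, fillPass_some_cons_replicate_none_append, ih]

end FillPass

/-- Correctness of Oblivious-Expand's fill pass: on the distributed array in
which cell `f i = 1 + Σ_{j<i} g j` holds `x i` (for `g i > 0`) and all other
cells hold `none`, the fill pass produces `g x₁` copies of `x₁` followed by
`g x₂` copies of `x₂`, and so on. -/
theorem fillPass_expand {α : Type*} (n : ℕ) (g : Fin n → ℕ) (x : Fin n → α) :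
    fillPass none
        ((List.finRange n).flatMap fun i =>
          if g i = 0 then [] else some (x i) :: List.replicate (g i - 1) none) =
      (List.finRange n).flatMap fun i => List.replicate (g i) (some (x i)) :=
  fillPass_flatMap_blocks g x (List.finRange n) none
end
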